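/- arXiv:2411.07188 — 7 statements merged into one kernel-verified Lean document; each statement's English description precedes it below -/
import Mathlib

section
/- Let A and B be finite lists of distinct symbols that are intersection-reverse as cyclic orders. Then no three symbols appear in the same order in A and B; that is, there is no 3-element list of pairwise distinct symbols that is a subsequence of both A and B. -/
/-!
Restrict both lists to their common symbols. A subsequence of a list reappears, rotated, in every
rotation of that list, so a common triple `[a, b, c]` puts a rotation of `[a, b, c]` and the
reversed triple `[c, b, a]` into the same duplicate-free list. But every rotation of `[a, b, c]`
contains some pair of symbols in the order opposite to the one they have in `[c, b, a]`.
-/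

/-- Three symbols appear in the same order in lists `A` and `B`:
there are pairwise distinct symbols `a, b, c` such that the list `[a, b, c]`
is a subsequence of both `A` and `B`. -/
def SameOrder3 {α : Type*} (A B : List α) : Prop :=
  ∃ a b c : α, a ≠ b ∧ a ≠ c ∧ b ≠ c ∧ [a, b, c].Sublist A ∧ [a, b, c].Sublist B

/-- Two lists of distinct symbols `A` and `B` are intersection-reverse as cyclic
orders: the sublist of `A` consisting of the symbols that also occur in `B`
equals, up to cyclic rotation, the reversal of the sublist of `B` consisting of
the symbols that also occur in `A`. -/
def CyclicIntRev {α : Type*} [DecidableEq α] (A B : List α) : Prop :=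
  (A.filter fun x => decide (x ∈ B)) ~r (B.filter fun x => decide (x ∈ A)).reverse

namespace List

variable {α : Type*}

theorem Sublist.sublist_filter {l L : List α} {p : α → Bool} (h : l <+ L)
    (hp : ∀ x ∈ l, p x) : l <+ L.filter p :=
  sublist_filter_iff.2 ⟨l, h, (filter_eq_self.2 hp).symm⟩

theorem Nodup.not_pair_sublist_swap {L : List α} (hL : L.Nodup) {x y : α}
    (hxy : [x, y] <+ L) : ¬ [y, x] <+ L := by
  intro hyx
  induction L with
  | nil => simp at hxy
  | cons z L ih =>
    rw [nodup_cons] at hL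
    cases hxy with
    | cons _ hxy =>
      cases hyx with
      | cons _ hyx => exact ih hL.2 hxy hyx
      | cons_cons _ hyx => exact hL.1 (hxy.subset (by simp))
    | cons_cons _ hxy =>
      cases hyx with
      | cons _ hyx => exact hL.1 (hyx.subset (by simp))
      | cons_cons _ hyx => exact hL.1 (hyx.subset (by simp))

theorem Sublist.exists_rotate_sublist_rotate {l L : List α} (h : l <+ L) (n : ℕ) :
    ∃ m, l.rotate m <+ L.rotate n := by
  rw [rotate_eq_drop_append_take_mod]
  rw [← take_append_drop (n % L.length) L] at h
  obtain ⟨s, t, rfl, hs, ht⟩ := sublist_append_iff.mp h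
  exact ⟨s.length, by simpa [rotate_append_length_eq] using ht.append hs⟩

theorem Nodup.not_rotate_sublist_of_reverse_sublist {L : List α} (hL : L.Nodup) {x y z : α}
    (m : ℕ) (hzyx : [z, y, x] <+ L) : ¬ [x, y, z].rotate m <+ L := by
  intro hxyz
  rw [← rotate_mod] at hxyz
  have hm : m % 3 < 3 := Nat.mod_lt _ (by norm_num)
  interval_cases m % 3 <;>
    simp only [rotate_cons_succ, cons_append, nil_append, rotate_zero] at hxyz
  · exact hL.not_pair_sublist_swap (x := x) (y := y)
      (Sublist.trans (by simp) hxyz) (Sublist.trans (by simp) hzyx)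
  · exact hL.not_pair_sublist_swap (x := y) (y := z)
      (Sublist.trans (by simp) hxyz) (Sublist.trans (by simp) hzyx)
  · exact hL.not_pair_sublist_swap (x := x) (y := y)
      (Sublist.trans (by simp) hxyz) (Sublist.trans (by simp) hzyx)

end List

open List in
theorem stmt_2_general {α : Type*} [DecidableEq α] (A B : List α)
    (hB : B.Nodup) (h : CyclicIntRev A B) :
    ¬ SameOrder3 A B := by
  rintro ⟨a, b, c, -, -, -, hA3, hB3⟩
  obtain ⟨n, hn⟩ := h
  have hA' : [a, b, c] <+ A.filter fun x => decide (x ∈ B) :=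
    hA3.sublist_filter fun x hx => by simpa using hB3.subset hx
  have hB' : [c, b, a] <+ (B.filter fun x => decide (x ∈ A)).reverse :=
    reverse_sublist.2 (hB3.sublist_filter fun x hx => by simpa using hA3.subset hx)
  obtain ⟨m, hm⟩ := hA'.exists_rotate_sublist_rotate n
  rw [hn] at hm
  exact (nodup_reverse.2 (hB.filter _)).not_rotate_sublist_of_reverse_sublist m hB' hm

/-- If the lists of distinct symbols `A` and `B` are intersection-reverse as
cyclic orders, then no three symbols appear in the same order in `A` and `B`. -/
theorem stmt_2 {α : Type*} [DecidableEq α] (A B : List α)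
    (hA : A.Nodup) (hB : B.Nodup) (h : CyclicIntRev A B) :
    ¬ SameOrder3 A B :=
  stmt_2_general A B hB h
end

section
/- Let A^1, …, A^n be finite lists of distinct symbols from a finite symbol set, and split each A^i into its halves A^i_0 and A^i_1. Then S ≥ −(1/2) · ∑_{i=1}^n |A^i|², where S = ∑_{i ≠ j} ∑_{ε ∈ {0,1}} ∑_{(a,b)} f(A^i_ε, A^j_ε, a, b), the outer sum ranging over ordered pairs of distinct indices i ≠ j and the innermost sum over ordered pairs (a,b) of distinct symbols. -/
/-- The first half of a list: its initial segment of length `⌈ℓ/2⌉`. -/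
def half0 {α : Type*} (A : List α) : List α := A.take ((A.length + 1) / 2)

/-- The second half of a list: its final segment of length `⌊ℓ/2⌋`. -/
def half1 {α : Type*} (A : List α) : List α := A.drop ((A.length + 1) / 2)

/-- `fval B a b` is `1` if `a` occurs before `b` in `B`, `-1` if `b` occurs
before `a` in `B`, and `0` if `a` or `b` does not occur in `B`. -/
def fval {α : Type*} [DecidableEq α] (B : List α) (a b : α) : ℤ :=
  if [a, b].Sublist B then 1 else if [b, a].Sublist B then -1 else 0

/-- `fval2 B B' a b = fval B a b * fval B' a b`. -/
def fval2 {α : Type*} [DecidableEq α] (B B' : List α) (a b : α) : ℤ :=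
  fval B a b * fval B' a b

/-! For a fixed half `ε`, regard `gᵢ(a, b) = f(Aⁱ_ε, a, b)` as a vector indexed by pairs of
distinct symbols. The `ε`-part of `S` is `∑_{i ≠ j} ⟪gᵢ, gⱼ⟫ = ‖∑ᵢ gᵢ‖² - ∑ᵢ ‖gᵢ‖² ≥ -∑ᵢ ‖gᵢ‖²`,
and `‖gᵢ‖²` is at most the number `ℓ(ℓ - 1)` of ordered pairs of distinct symbols of `Aⁱ_ε`,
`ℓ = |Aⁱ_ε|`. Since the two halves have lengths differing by at most one, these counts for
`ε = 0, 1` add up to at most `|Aⁱ|² / 2`. -/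

section OffDiagSums

variable {ι β R : Type*} [DecidableEq ι]

theorem Finset.sum_offDiag_mul_eq [CommRing R] (s : Finset ι) (x : ι → R) :
    ∑ p ∈ s.offDiag, x p.1 * x p.2 = (∑ i ∈ s, x i) ^ 2 - ∑ i ∈ s, x i ^ 2 := by
  rw [sq, Finset.sum_mul_sum, ← Finset.sum_product', ← Finset.diag_union_offDiag,
    Finset.sum_union (Finset.disjoint_diag_offDiag _), Finset.sum_diag]
  simp only [sq, add_sub_cancel_left]

variable [CommRing R] [LinearOrder R] [IsOrderedRing R]

theorem Finset.neg_sum_sq_le_sum_offDiag_mul (s : Finset ι) (x : ι → R) :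
    -∑ i ∈ s, x i ^ 2 ≤ ∑ p ∈ s.offDiag, x p.1 * x p.2 := by
  rw [Finset.sum_offDiag_mul_eq, neg_le_sub_iff_le_add, le_add_iff_nonneg_left]
  exact sq_nonneg _

theorem Finset.neg_sum_sum_sq_le_sum_offDiag_sum_mul (s : Finset ι) (Q : Finset β)
    (g : ι → β → R) :
    -∑ i ∈ s, ∑ q ∈ Q, g i q ^ 2 ≤ ∑ p ∈ s.offDiag, ∑ q ∈ Q, g p.1 q * g p.2 q := by
  rw [Finset.sum_comm, Finset.sum_comm (s := s.offDiag), ← Finset.sum_neg_distrib]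
  exact Finset.sum_le_sum fun q _ => Finset.neg_sum_sq_le_sum_offDiag_mul s (g · q)

end OffDiagSums

section Fval

variable {α : Type*} [DecidableEq α]

theorem fval_sq_le (B : List α) (a b : α) :
    fval B a b ^ 2 ≤ if a ∈ B ∧ b ∈ B then 1 else 0 := by
  by_cases hmem : a ∈ B ∧ b ∈ B
  · rw [if_pos hmem]
    unfold fval
    split_ifs <;> norm_num
  · have hab : ¬[a, b].Sublist B := fun h => hmem ⟨h.subset (by simp), h.subset (by simp)⟩
    have hba : ¬[b, a].Sublist B := fun h => hmem ⟨h.subset (by simp), h.subset (by simp)⟩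
    simp [fval, hab, hba, hmem]

theorem sum_offDiag_fval_sq_le [Fintype α] {B : List α} (hB : B.Nodup) :
    ∑ q ∈ (Finset.univ : Finset α).offDiag, fval B q.1 q.2 ^ 2
      ≤ (B.length : ℤ) ^ 2 - B.length := by
  have hpairs : (Finset.univ : Finset α).offDiag.filter (fun q => q.1 ∈ B ∧ q.2 ∈ B)
      = B.toFinset.offDiag := by
    ext q
    simp only [Finset.mem_filter, Finset.mem_offDiag, Finset.mem_univ, true_and,
      List.mem_toFinset]
    tauto
  calc ∑ q ∈ (Finset.univ : Finset α).offDiag, fval B q.1 q.2 ^ 2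
      ≤ ∑ q ∈ (Finset.univ : Finset α).offDiag, if q.1 ∈ B ∧ q.2 ∈ B then 1 else 0 :=
        Finset.sum_le_sum fun q _ => fval_sq_le B q.1 q.2
    _ = (B.length : ℤ) ^ 2 - B.length := by
        rw [Finset.sum_boole, hpairs, Finset.offDiag_card, List.toFinset_card_of_nodup hB,
          Nat.cast_sub (Nat.le_mul_self _)]
        push_cast
        ring

end Fval

section Halves

variable {α : Type*}

theorem List.Nodup.half0 {A : List α} (h : A.Nodup) : (half0 A).Nodup :=
  (A.take_sublist _).nodup h

theorem List.Nodup.half1 {A : List α} (h : A.Nodup) : (half1 A).Nodup :=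
  (A.drop_sublist _).nodup h

theorem two_mul_pairs_halves_le (A : List α) :
    2 * (((half0 A).length : ℤ) ^ 2 - (half0 A).length +
      (((half1 A).length : ℤ) ^ 2 - (half1 A).length)) ≤ (A.length : ℤ) ^ 2 := by
  have hsum : (half0 A).length + (half1 A).length = A.length := by
    simp only [half0, half1, List.length_take, List.length_drop]
    omega
  have hbalanced : (half1 A).length ≤ (half0 A).length ∧
      (half0 A).length ≤ (half1 A).length + 1 := by
    simp only [half0, half1, List.length_take, List.length_drop]
    omega
  rw [← hsum]
  push_cast
  -- this is `(ℓ₀ - ℓ₁)² ≤ 2 (ℓ₀ + ℓ₁)`, which holds as `ℓ₀ - ℓ₁ ∈ {0, 1}`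
  nlinarith [sq_nonneg (((half0 A).length : ℤ) - (half1 A).length)]

theorem two_mul_sum_offDiag_fval_sq_halves_le [DecidableEq α] [Fintype α] {A : List α}
    (hA : A.Nodup) :
    2 * (∑ q ∈ (Finset.univ : Finset α).offDiag, fval (half0 A) q.1 q.2 ^ 2 +
      ∑ q ∈ (Finset.univ : Finset α).offDiag, fval (half1 A) q.1 q.2 ^ 2) ≤ (A.length : ℤ) ^ 2 :=
  calc _ ≤ 2 * (((half0 A).length : ℤ) ^ 2 - (half0 A).length +
          (((half1 A).length : ℤ) ^ 2 - (half1 A).length)) := by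
        gcongr
        · exact sum_offDiag_fval_sq_le hA.half0
        · exact sum_offDiag_fval_sq_le hA.half1
    _ ≤ (A.length : ℤ) ^ 2 := two_mul_pairs_halves_le A

end Halves

/-- If `A 1, …, A n` are lists of distinct symbols from a finite symbol set,
each split into halves, then
`S = ∑_{i ≠ j} ∑_{ε ∈ {0,1}} ∑_{(a,b) distinct} f(Aᵢ_ε, Aⱼ_ε, a, b)`
satisfies `S ≥ -(1/2) ∑ i, |A i|²`. -/
theorem stmt_4 {α : Type*} [Fintype α] [DecidableEq α]
    (n : ℕ) (A : Fin n → List α) (hnd : ∀ i, (A i).Nodup) :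
    (((∑ p ∈ (Finset.univ : Finset (Fin n)).offDiag,
        ((∑ q ∈ (Finset.univ : Finset α).offDiag,
            fval2 (half0 (A p.1)) (half0 (A p.2)) q.1 q.2) +
         (∑ q ∈ (Finset.univ : Finset α).offDiag,
            fval2 (half1 (A p.1)) (half1 (A p.2)) q.1 q.2))) : ℤ) : ℝ)
      ≥ -(1 / 2 : ℝ) * ∑ i, ((A i).length : ℝ) ^ 2 := by
  set Q := (Finset.univ : Finset α).offDiag
  have h0 := Finset.neg_sum_sum_sq_le_sum_offDiag_sum_mul Finset.univ Q
    fun i q => fval (half0 (A i)) q.1 q.2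
  have h1 := Finset.neg_sum_sum_sq_le_sum_offDiag_sum_mul Finset.univ Q
    fun i q => fval (half1 (A i)) q.1 q.2
  have htotal := Finset.sum_le_sum fun i (_ : i ∈ Finset.univ) =>
    two_mul_sum_offDiag_fval_sq_halves_le (hnd i)
  rw [← Finset.mul_sum, Finset.sum_add_distrib] at htotal
  have hS : -∑ i, ((A i).length : ℤ) ^ 2 ≤ 2 * ∑ p ∈ (Finset.univ : Finset (Fin n)).offDiag,
      (∑ q ∈ Q, fval2 (half0 (A p.1)) (half0 (A p.2)) q.1 q.2 +
        ∑ q ∈ Q, fval2 (half1 (A p.1)) (half1 (A p.2)) q.1 q.2) := by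
    simp only [fval2, Finset.sum_add_distrib]
    linarith
  have hR := (Int.cast_le (R := ℝ)).mpr hS
  push_cast at hR ⊢
  linarith
end

section
/- Let B and B' be finite lists of distinct symbols such that no three symbols appear in the same order in B and B', and let k = |B ∩ B'|. Then ∑_{(a,b)} f(B, B', a, b) ≤ k, where the sum ranges over ordered pairs (a,b) of distinct symbols. Moreover, if B and B' are intersection-reverse, then ∑_{(a,b)} f(B, B', a, b) = k − k². -/
/-- Two lists of distinct symbols are intersection-reverse if their common
elements appear in reverse order in the two lists: for any two distinct symbols
`a, b` occurring in both, `a` occurs before `b` in `B` iff `b` occurs before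
`a` in `B'`. -/
def IntRev {α : Type*} (B B' : List α) : Prop :=
  ∀ a ∈ B, ∀ b ∈ B, a ≠ b → a ∈ B' → b ∈ B' →
    ([a, b].Sublist B ↔ [b, a].Sublist B')

/-- `interCard B B'` is the number of symbols occurring in both `B` and `B'`. -/
def interCard {α : Type*} [DecidableEq α] (B B' : List α) : ℕ :=
  (B.filter fun x => decide (x ∈ B')).length

/-!
On the set `S` of common symbols, `|S| = k`, an ordered pair of distinct symbols contributes `+1`
when both lists order it the same way and `-1` otherwise; all other pairs contribute `0`. So the
sum is `2A - (k² - k)`, where `A` counts the agreeing ordered pairs. Agreement is a triangle-free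
graph on `S`, because a triangle would be three symbols in the same order in both lists, and
Mantel's theorem gives `2A ≤ k²`. For intersection-reverse lists `A = 0`.
-/

open Finset

namespace List
variable {α : Type*} {l : List α} {a b c : α}

theorem Nodup.triple_sublist (hl : l.Nodup) (hab : [a, b] <+ l) (hbc : [b, c] <+ l) :
    [a, b, c] <+ l := by
  induction l with
  | nil => simp at hab
  | cons x t ih =>
    have hx := (nodup_cons.mp hl).1
    rcases sublist_cons_iff.mp hab with hab' | ⟨_, ⟨rfl, rfl⟩, hb⟩ <;>
      rcases sublist_cons_iff.mp hbc with hbc' | ⟨_, ⟨rfl, rfl⟩, hc⟩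
    · exact (ih (nodup_cons.mp hl).2 hab' hbc').cons x
    · exact absurd (hab'.subset (mem_cons_of_mem _ mem_cons_self)) hx
    · exact hbc'.cons_cons _
    · exact absurd (singleton_sublist.mp hb) hx

theorem Nodup.not_pair_sublist_swap_s5 (hl : l.Nodup) (hab : [a, b] <+ l) : ¬[b, a] <+ l :=
  fun hba => nodup_iff_sublist.mp hl a
    (Sublist.trans (by simp) (hl.triple_sublist hab hba))

theorem pair_sublist_or_swap (ha : a ∈ l) (hb : b ∈ l) (hab : a ≠ b) :
    [a, b] <+ l ∨ [b, a] <+ l := by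
  induction l with
  | nil => simp at ha
  | cons x t ih =>
    rcases mem_cons.mp ha with rfl | ha' <;> rcases mem_cons.mp hb with rfl | hb'
    · exact absurd rfl hab
    · exact .inl ((singleton_sublist.mpr hb').cons_cons _)
    · exact .inr ((singleton_sublist.mpr ha').cons_cons _)
    · exact (ih ha' hb').imp (·.cons x) (·.cons x)

end List

namespace SimpleGraph
variable {V : Type*} [Fintype V] {G : SimpleGraph V} [DecidableRel G.Adj]

theorem CliqueFree.four_mul_card_edgeFinset_le (hG : G.CliqueFree 3) :
    4 * #G.edgeFinset ≤ Fintype.card V ^ 2 := by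
  have h := hG.card_edgeFinset_le
  simp only [Nat.choose_eq_zero_of_lt (Nat.mod_lt _ two_pos), add_zero] at h
  omega

end SimpleGraph

theorem Finset.two_mul_card_filter_offDiag_le_sq {α : Type*} [DecidableEq α] (s : Finset α)
    {r : α → α → Prop} [DecidableRel r] (hsymm : ∀ a b, r a b → r b a)
    (htri : ∀ a ∈ s, ∀ b ∈ s, ∀ c ∈ s, a ≠ b → a ≠ c → b ≠ c → r a b → r b c → r a c → False) :
    2 * #{q ∈ s.offDiag | r q.1 q.2} ≤ #s ^ 2 := by
  let G : SimpleGraph s :=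
    { Adj x y := x ≠ y ∧ r x y
      symm := ⟨fun _ _ h => ⟨h.1.symm, hsymm _ _ h.2⟩⟩
      loopless := ⟨fun _ h => h.1 rfl⟩ }
  have hG : G.CliqueFree 3 := by
    rintro t ht
    obtain ⟨a, b, c, hab, hac, hbc, -⟩ := SimpleGraph.is3Clique_iff.mp ht
    exact htri a a.2 b b.2 c c.2 (Subtype.coe_ne_coe.mpr hab.1) (Subtype.coe_ne_coe.mpr hac.1)
      (Subtype.coe_ne_coe.mpr hbc.1) hab.2 hbc.2 hac.2
  have hdarts : #{q ∈ s.offDiag | r q.1 q.2} = Fintype.card G.Dart := by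
    rw [← Fintype.card_coe]
    refine Fintype.card_congr
      { toFun q := ⟨(⟨q.1.1, ?_⟩, ⟨q.1.2, ?_⟩), ?_⟩
        invFun d := ⟨(d.fst, d.snd), ?_⟩
        left_inv _ := rfl
        right_inv _ := rfl }
    · exact (mem_offDiag.mp (mem_filter.mp q.2).1).1
    · exact (mem_offDiag.mp (mem_filter.mp q.2).1).2.1
    · exact ⟨fun h => (mem_offDiag.mp (mem_filter.mp q.2).1).2.2 (congrArg Subtype.val h),
        (mem_filter.mp q.2).2⟩
    · exact mem_filter.mpr ⟨mem_offDiag.mpr ⟨d.fst.2, d.snd.2, Subtype.coe_ne_coe.mpr d.adj.1⟩,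
        d.adj.2⟩
  rw [hdarts, G.dart_card_eq_twice_card_edges, ← mul_assoc]
  simpa using hG.four_mul_card_edgeFinset_le

section
open List
variable {α : Type*} {B B' : List α} {a b c : α}

def SameOrder2 (B B' : List α) (a b : α) : Prop :=
  [a, b] <+ B ∧ [a, b] <+ B' ∨ [b, a] <+ B ∧ [b, a] <+ B'

instance [DecidableEq α] : DecidableRel (SameOrder2 B B') :=
  fun _ _ => inferInstanceAs (Decidable (_ ∨ _))

theorem SameOrder2.symm (h : SameOrder2 B B' a b) : SameOrder2 B B' b a := Or.symm h

theorem SameOrder2.ne (hB : B.Nodup) (h : SameOrder2 B B' a b) : a ≠ b := by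
  rintro rfl
  exact nodup_iff_sublist.mp hB a (by rcases h with h | h <;> exact h.1)

theorem sameOrder3_of_sameOrder2 (hB : B.Nodup) (hB' : B'.Nodup) (hab : SameOrder2 B B' a b)
    (hbc : SameOrder2 B B' b c) (hac : SameOrder2 B B' a c) : SameOrder3 B B' := by
  wlog hab' : [a, b] <+ B ∧ [a, b] <+ B' generalizing a b
  · exact this hab.symm hac hbc (hab.resolve_left hab')
  have hne_ab := hab.ne hB
  have hne_bc := hbc.ne hB
  have hne_ac := hac.ne hB
  rcases hac with hac' | hca'
  · rcases hbc with hbc' | hcb'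
    · exact ⟨a, b, c, hne_ab, hne_ac, hne_bc, hB.triple_sublist hab'.1 hbc'.1,
        hB'.triple_sublist hab'.2 hbc'.2⟩
    · exact ⟨a, c, b, hne_ac, hne_ab, hne_bc.symm, hB.triple_sublist hac'.1 hcb'.1,
        hB'.triple_sublist hac'.2 hcb'.2⟩
  · exact ⟨c, a, b, hne_ac.symm, hne_bc.symm, hne_ab, hB.triple_sublist hca'.1 hab'.1,
      hB'.triple_sublist hca'.2 hab'.2⟩

theorem IntRev.not_sameOrder2 (h : IntRev B B') (hB' : B'.Nodup) : ¬SameOrder2 B B' a b := by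
  have key {x y : α} (hxy : [x, y] <+ B) (hxy' : [x, y] <+ B') : False := by
    have hne : x ≠ y := fun e => nodup_iff_sublist.mp hB' x (e ▸ hxy')
    have hyx' := (h x (hxy.subset (by simp)) y (hxy.subset (by simp)) hne (hxy'.subset (by simp))
      (hxy'.subset (by simp))).mp hxy
    exact hB'.not_pair_sublist_swap_s5 hxy' hyx'
  rintro (⟨h, h'⟩ | ⟨h, h'⟩) <;> exact key h h'

end

section
open List
variable {α : Type*} [DecidableEq α] {B B' : List α} {a b : α}

theorem fval_of_sublist (h : [a, b] <+ B) : fval B a b = 1 := if_pos h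

theorem fval_of_sublist_swap (hB : B.Nodup) (h : [b, a] <+ B) : fval B a b = -1 := by
  rw [fval, if_neg (hB.not_pair_sublist_swap_s5 h), if_pos h]

theorem fval_eq_zero (h : ¬(a ∈ B ∧ b ∈ B)) : fval B a b = 0 := by
  have hmem {x y : α} (hxy : [x, y] <+ B) : x ∈ B ∧ y ∈ B :=
    ⟨hxy.subset (by simp), hxy.subset (by simp)⟩
  rw [fval, if_neg (fun hab => h (hmem hab)), if_neg (fun hba => h (hmem hba).symm)]

theorem fval2_eq_ite (hB : B.Nodup) (hB' : B'.Nodup) (hab : a ≠ b) (ha : a ∈ B) (hb : b ∈ B)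
    (ha' : a ∈ B') (hb' : b ∈ B') :
    fval2 B B' a b = if SameOrder2 B B' a b then 1 else -1 := by
  rcases pair_sublist_or_swap ha hb hab with h | h <;>
    rcases pair_sublist_or_swap ha' hb' hab with h' | h' <;>
    simp [fval2, SameOrder2, fval_of_sublist, fval_of_sublist_swap, hB, hB', h, h',
      hB.not_pair_sublist_swap_s5 h, hB'.not_pair_sublist_swap_s5 h']

theorem interCard_eq_card_inter (hB : B.Nodup) :
    interCard B B' = #(B.toFinset ∩ B'.toFinset) := by
  rw [interCard, ← toFinset_card_of_nodup (hB.filter _)]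
  congr 1
  ext x
  simp

theorem sum_offDiag_fval2 [Fintype α] (hB : B.Nodup) (hB' : B'.Nodup) :
    ∑ q ∈ (univ : Finset α).offDiag, fval2 B B' q.1 q.2 =
      2 * #{q ∈ (B.toFinset ∩ B'.toFinset).offDiag | SameOrder2 B B' q.1 q.2} -
        #(B.toFinset ∩ B'.toFinset).offDiag := by
  set S := B.toFinset ∩ B'.toFinset
  calc ∑ q ∈ (univ : Finset α).offDiag, fval2 B B' q.1 q.2
      = ∑ q ∈ S.offDiag, fval2 B B' q.1 q.2 := by
        refine (sum_subset (offDiag_mono (subset_univ S)) fun q hq hqS => ?_).symm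
        obtain ⟨-, -, hne⟩ := mem_offDiag.mp hq
        have hout : ¬(q.1 ∈ B ∧ q.2 ∈ B) ∨ ¬(q.1 ∈ B' ∧ q.2 ∈ B') := by
          simp only [S, mem_offDiag, mem_inter, List.mem_toFinset] at hqS
          tauto
        rcases hout with h | h
        · rw [fval2, fval_eq_zero h, zero_mul]
        · rw [fval2, fval_eq_zero h, mul_zero]
    _ = ∑ q ∈ S.offDiag, (2 * (if SameOrder2 B B' q.1 q.2 then 1 else 0) - 1 : ℤ) := by
        refine sum_congr rfl fun q hq => ?_
        obtain ⟨h1, h2, hne⟩ := mem_offDiag.mp hq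
        simp only [S, mem_inter, List.mem_toFinset] at h1 h2
        rw [fval2_eq_ite hB hB' hne h1.1 h2.1 h1.2 h2.2]
        split_ifs <;> norm_num
    _ = _ := by
        rw [sum_sub_distrib, ← mul_sum, sum_boole, sum_const]
        simp

end

/-- If `B` and `B'` are lists of distinct symbols such that no three symbols
appear in the same order in `B` and `B'`, and `k = |B ∩ B'|`, then
`∑_{(a,b) distinct} f(B, B', a, b) ≤ k`; moreover, if `B` and `B'` are
intersection-reverse, then this sum equals `k - k²`. -/
theorem stmt_5 {α : Type*} [Fintype α] [DecidableEq α] (B B' : List α)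
    (hB : B.Nodup) (hB' : B'.Nodup) (h3 : ¬ SameOrder3 B B')
    (k : ℤ) (hk : k = (interCard B B' : ℤ)) :
    (∑ q ∈ (Finset.univ : Finset α).offDiag, fval2 B B' q.1 q.2) ≤ k ∧
      (IntRev B B' →
        (∑ q ∈ (Finset.univ : Finset α).offDiag, fval2 B B' q.1 q.2) = k - k ^ 2) := by
  set S := B.toFinset ∩ B'.toFinset
  have hkS : k = #S := by rw [hk, interCard_eq_card_inter hB]
  have hoff : (#S.offDiag : ℤ) = k ^ 2 - k := by
    rw [hkS, offDiag_card, Nat.cast_sub (Nat.le_mul_self _)]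
    push_cast
    ring
  have hsum := sum_offDiag_fval2 hB hB'
  refine ⟨?_, fun hrev => ?_⟩
  · have hmantel :=
      S.two_mul_card_filter_offDiag_le_sq (r := SameOrder2 B B') (fun _ _ h => h.symm)
      fun a _ b _ c _ _ _ _ hab hbc hac => h3 (sameOrder3_of_sameOrder2 hB hB' hab hbc hac)
    have hmantel' : (2 * #{q ∈ S.offDiag | SameOrder2 B B' q.1 q.2} : ℤ) ≤ k ^ 2 := by
      rw [hkS]
      exact_mod_cast hmantel
    linarith
  · have hnone : #{q ∈ S.offDiag | SameOrder2 B B' q.1 q.2} = 0 :=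
      card_eq_zero.mpr (filter_eq_empty_iff.mpr fun _ _ => hrev.not_sameOrder2 hB')
    rw [hsum, hnone, hoff]
    ring
end

section
/- Let A and A' be finite lists of distinct symbols such that no three symbols appear in the same order in A and A', and split each into halves A_0, A_1 and A'_0, A'_1. If for some ε ∈ {0,1} the lists A_ε and A'_ε are not intersection-reverse, then A_{1−ε} and A'_{1−ε} have no common symbol. -/
/-- The half of a list selected by `ε : Bool`: for `ε = false` the initial
segment of length `⌈ℓ/2⌉`, for `ε = true` the complementary final segment of
length `⌊ℓ/2⌋`. -/
def half {α : Type*} (ε : Bool) (A : List α) : List α :=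
  if ε then A.drop ((A.length + 1) / 2) else A.take ((A.length + 1) / 2)

/-! If the halves `A_ε`, `A'_ε` are not intersection-reverse, two distinct symbols `a, b` occur in
the same order in both of them. A symbol `x` common to the other halves lies after (for `ε = 0`) or
before (for `ε = 1`) both `a` and `b` in `A` and in `A'`, so `a, b, x` (resp. `x, a, b`) would be
three symbols in the same order in `A` and `A'`. -/

namespace List

variable {α : Type*}

theorem pair_sublist_or_pair_sublist {a b : α} {l : List α} (ha : a ∈ l) (hb : b ∈ l)
    (hab : a ≠ b) : [a, b] <+ l ∨ [b, a] <+ l := by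
  obtain ⟨s, t, rfl⟩ := append_of_mem ha
  rcases mem_append.mp hb with hs | ht
  · exact Or.inr ((singleton_sublist.mpr hs).append ((nil_sublist t).cons_cons a))
  · have hbt : b ∈ t := by simpa [hab.symm] using ht
    exact Or.inl (((singleton_sublist.mpr hbt).cons_cons a).trans (sublist_append_right s _))

end List

section Halves

open List

variable {α : Type*}

theorem half_false_append_half_true (l : List α) : half false l ++ half true l = l :=
  take_append_drop _ _

theorem List.Sublist.append_of_sublist_half {l₀ l₁ L : List α} (h₀ : l₀ <+ half false L)
    (h₁ : l₁ <+ half true L) : l₀ ++ l₁ <+ L :=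
  half_false_append_half_true L ▸ h₀.append h₁

theorem disjoint_half_half_not {L : List α} (hL : L.Nodup) (ε : Bool) :
    Disjoint (half ε L) (half (!ε) L) := by
  have hdisj := disjoint_of_nodup_append ((half_false_append_half_true L).symm ▸ hL)
  cases ε
  · exact hdisj
  · exact hdisj.symm

theorem exists_pair_sublist_of_not_intRev {B B' : List α} (h : ¬ IntRev B B') :
    ∃ a b, a ≠ b ∧ [a, b] <+ B ∧ [a, b] <+ B' := by
  simp only [IntRev, not_forall, iff_iff_implies_and_implies, not_and_or] at h
  obtain ⟨a, ha, b, hb, hab, ha', hb', ⟨hB, hB'⟩ | ⟨hB', hB⟩⟩ := h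
  · refine ⟨a, b, hab, hB, ?_⟩
    exact (pair_sublist_or_pair_sublist ha' hb' hab).resolve_right hB'
  · refine ⟨b, a, hab.symm, ?_, hB'⟩
    exact (pair_sublist_or_pair_sublist hb ha hab.symm).resolve_right hB

theorem sameOrder3_of_pair_sublist_half {A A' : List α} (hA : A.Nodup) {a b x : α} (hab : a ≠ b)
    {ε : Bool} (h : [a, b] <+ half ε A) (h' : [a, b] <+ half ε A')
    (hx : x ∈ half (!ε) A) (hx' : x ∈ half (!ε) A') : SameOrder3 A A' := by
  have hne := disjoint_iff_ne.mp (disjoint_half_half_not hA ε)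
  have hax : a ≠ x := hne a (h.subset (by simp)) x hx
  have hbx : b ≠ x := hne b (h.subset (by simp)) x hx
  have hxs := singleton_sublist.mpr hx
  have hxs' := singleton_sublist.mpr hx'
  cases ε
  · exact ⟨a, b, x, hab, hax, hbx, h.append_of_sublist_half hxs, h'.append_of_sublist_half hxs'⟩
  · exact ⟨x, a, b, hax.symm, hbx.symm, hab, Sublist.append_of_sublist_half hxs h,
      Sublist.append_of_sublist_half hxs' h'⟩

end Halves

theorem stmt_6_general {α : Type*} (A A' : List α)
    (hA : A.Nodup) (h3 : ¬ SameOrder3 A A')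
    (ε : Bool) (h : ¬ IntRev (half ε A) (half ε A')) :
    ∀ x, x ∈ half (!ε) A → x ∉ half (!ε) A' := by
  intro x hx hx'
  obtain ⟨a, b, hab, hB, hB'⟩ := exists_pair_sublist_of_not_intRev h
  exact h3 (sameOrder3_of_pair_sublist_half hA hab hB hB' hx hx')

/-- Let `A` and `A'` be lists of distinct symbols such that no three symbols
appear in the same order in `A` and `A'`, split into halves. If for some
`ε ∈ {0,1}` the halves `A_ε` and `A'_ε` are not intersection-reverse, then
`A_{1-ε}` and `A'_{1-ε}` have no common symbol. -/
theorem stmt_6 {α : Type*} (A A' : List α)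
    (hA : A.Nodup) (hA' : A'.Nodup) (h3 : ¬ SameOrder3 A A')
    (ε : Bool) (h : ¬ IntRev (half ε A) (half ε A')) :
    ∀ x, x ∈ half (!ε) A → x ∉ half (!ε) A' :=
  stmt_6_general A A' hA h3 ε h
end

section
/- Let A^1, …, A^n be finite lists of distinct symbols from a finite symbol set such that no three symbols appear in the same order in any two distinct lists A^i and A^j (i ≠ j), and split each A^i into halves A^i_0, A^i_1. Then S ≤ ∑_{i ≠ j} |A^i ∩ A^j| − ∑_{(i,j,ε) : i ≠ j, A^i_ε and A^j_ε intersection-reverse} |A^i_ε ∩ A^j_ε|², where S = ∑_{i ≠ j} ∑_{ε ∈ {0,1}} ∑_{(a,b)} f(A^i_ε, A^j_ε, a, b), all sums over pairs of indices ranging over ordered pairs i ≠ j, and the innermost sum over ordered pairs (a,b) of distinct symbols. -/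
instance {α : Type*} [DecidableEq α] (B B' : List α) : Decidable (IntRev B B') := by
  unfold IntRev; infer_instance

namespace List.Nodup

variable {α : Type*} [DecidableEq α] {B : List α} {a b c : α}

theorem pairwise_idxOf_lt (hB : B.Nodup) : B.Pairwise (B.idxOf · < B.idxOf ·) := by
  rw [pairwise_iff_getElem]
  intro i j hi hj hij
  rwa [hB.idxOf_getElem, hB.idxOf_getElem]

theorem pair_sublist_iff (hB : B.Nodup) :
    [a, b] <+ B ↔ a ∈ B ∧ b ∈ B ∧ B.idxOf a < B.idxOf b := by
  refine ⟨fun h => ⟨h.subset (by simp), h.subset (by simp),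
    pairwise_iff_forall_sublist.1 hB.pairwise_idxOf_lt h⟩, ?_⟩
  rintro ⟨ha, hb, hab⟩
  simpa [getElem_idxOf] using map_getElem_sublist (l := B)
    (is := [⟨_, idxOf_lt_length_of_mem ha⟩, ⟨_, idxOf_lt_length_of_mem hb⟩])
    (by simpa using hab)

theorem not_pair_sublist_swap_s9 (hB : B.Nodup) (h : [a, b] <+ B) : ¬ [b, a] <+ B := by
  rw [hB.pair_sublist_iff] at h ⊢
  omega

theorem pair_sublist_or (hB : B.Nodup) (ha : a ∈ B) (hb : b ∈ B) (hab : a ≠ b) :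
    [a, b] <+ B ∨ [b, a] <+ B := by
  simp only [hB.pair_sublist_iff, ha, hb, true_and]
  have : B.idxOf a ≠ B.idxOf b := fun h => hab ((idxOf_inj ha).1 h)
  omega

theorem triple_sublist_s9 (hB : B.Nodup) (hab : [a, b] <+ B) (hbc : [b, c] <+ B) :
    [a, b, c] <+ B := by
  rw [hB.pair_sublist_iff] at hab hbc
  simpa [getElem_idxOf] using map_getElem_sublist (l := B)
    (is := [⟨_, idxOf_lt_length_of_mem hab.1⟩, ⟨_, idxOf_lt_length_of_mem hab.2.1⟩,
      ⟨_, idxOf_lt_length_of_mem hbc.2.1⟩]) (by simp; omega)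

end List.Nodup

theorem Finset.four_mul_card_filter_le_sq_of_not_chain {β : Type*} [DecidableEq β]
    (s : Finset β) (r : β → β → Prop) [DecidableRel r] (hr : ∀ a b c, r a b → ¬ r b c) :
    4 * ((s ×ˢ s).filter fun p => r p.1 p.2).card ≤ s.card ^ 2 := by
  classical
  set sources := s.filter fun a => ∃ b, r a b
  set targets := s.filter fun b => ∃ a, r a b
  have hsub : ((s ×ˢ s).filter fun p => r p.1 p.2) ⊆ sources ×ˢ targets := by
    intro p hp
    simp only [sources, targets, Finset.mem_filter, Finset.mem_product] at hp ⊢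
    exact ⟨⟨hp.1.1, _, hp.2⟩, hp.1.2, _, hp.2⟩
  have hdisj : Disjoint sources targets := by
    refine Finset.disjoint_left.2 fun b hs ht => ?_
    obtain ⟨-, c, hbc⟩ := Finset.mem_filter.1 hs
    obtain ⟨-, a, hab⟩ := Finset.mem_filter.1 ht
    exact hr a b c hab hbc
  have hcard : sources.card + targets.card ≤ s.card := by
    rw [← Finset.card_union_of_disjoint hdisj]
    exact Finset.card_le_card (Finset.union_subset (Finset.filter_subset _ _)
      (Finset.filter_subset _ _))
  calc 4 * ((s ×ˢ s).filter fun p => r p.1 p.2).card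
      ≤ 4 * sources.card * targets.card := by
        rw [mul_assoc, ← Finset.card_product]
        exact Nat.mul_le_mul_left _ (Finset.card_le_card hsub)
    _ ≤ (sources.card + targets.card) ^ 2 := four_mul_le_sq_add _ _
    _ ≤ s.card ^ 2 := Nat.pow_le_pow_left hcard 2

theorem Finset.two_mul_card_filter_le_sq_of_not_chain {β : Type*} [DecidableEq β]
    (s : Finset β) (r : β → β → Prop) [DecidableRel r] (hr : ∀ a b c, r a b → ¬ r b c) :
    2 * (s.offDiag.filter fun p => r p.1 p.2 ∨ r p.2 p.1).card ≤ s.card ^ 2 := by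
  set pairs := (s ×ˢ s).filter fun p => r p.1 p.2
  have hsub :
      (s.offDiag.filter fun p => r p.1 p.2 ∨ r p.2 p.1) ⊆ pairs ∪ pairs.image Prod.swap := by
    rintro ⟨a, b⟩ hp
    simp only [pairs, Finset.mem_filter, Finset.mem_offDiag, Finset.mem_union, Finset.mem_image,
      Finset.mem_product, Prod.exists, Prod.swap_prod_mk, Prod.mk.injEq] at hp ⊢
    rcases hp with ⟨⟨ha, hb, -⟩, h | h⟩
    · exact Or.inl ⟨⟨ha, hb⟩, h⟩
    · exact Or.inr ⟨b, a, ⟨⟨hb, ha⟩, h⟩, rfl, rfl⟩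
  have hcard := (Finset.card_le_card hsub).trans (Finset.card_union_le _ _)
  have : 4 * pairs.card ≤ s.card ^ 2 := s.four_mul_card_filter_le_sq_of_not_chain r hr
  have := Finset.card_image_le (s := pairs) (f := Prod.swap)
  omega

section PairCount

variable {α : Type*} [DecidableEq α] {B B' : List α} {a b : α}

def BeforeInBoth (B B' : List α) (a b : α) : Prop := [a, b].Sublist B ∧ [a, b].Sublist B'

instance : DecidableRel (BeforeInBoth B B') := fun _ _ => inferInstanceAs (Decidable (_ ∧ _))

theorem sameOrder3_of_beforeInBoth {c : α} (hB : B.Nodup) (hB' : B'.Nodup)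
    (hab : BeforeInBoth B B' a b) (hbc : BeforeInBoth B B' b c) : SameOrder3 B B' := by
  have habc := hB.triple_sublist_s9 hab.1 hbc.1
  have hne := hB.sublist habc
  simp only [List.nodup_cons, List.mem_cons, List.not_mem_nil, or_false, not_or] at hne
  exact ⟨a, b, c, hne.1.1, hne.1.2, hne.2.1, habc, hB'.triple_sublist_s9 hab.2 hbc.2⟩

theorem card_toFinset_inter (hB : B.Nodup) :
    (B.toFinset ∩ B'.toFinset).card = interCard B B' := by
  rw [interCard, ← List.toFinset_card_of_nodup (hB.filter _)]
  congr 1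
  ext x
  simp

theorem fval_eq_zero_of_not_mem (h : ¬ (a ∈ B ∧ b ∈ B)) : fval B a b = 0 := by
  have hab : ¬ [a, b].Sublist B := fun hs => h ⟨hs.subset (by simp), hs.subset (by simp)⟩
  have hba : ¬ [b, a].Sublist B := fun hs => h ⟨hs.subset (by simp), hs.subset (by simp)⟩
  rw [fval, if_neg hab, if_neg hba]

theorem fval_of_mem (hB : B.Nodup) (ha : a ∈ B) (hb : b ∈ B) (hab : a ≠ b) :
    fval B a b = if [a, b].Sublist B then 1 else -1 := by
  unfold fval
  split_ifs with h h' <;> first | rfl | exact absurd (hB.pair_sublist_or ha hb hab) (by tauto)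

theorem fval2_of_mem (hB : B.Nodup) (hB' : B'.Nodup) (ha : a ∈ B.toFinset ∩ B'.toFinset)
    (hb : b ∈ B.toFinset ∩ B'.toFinset) (hab : a ≠ b) :
    fval2 B B' a b = if BeforeInBoth B B' a b ∨ BeforeInBoth B B' b a then 1 else -1 := by
  simp only [Finset.mem_inter, List.mem_toFinset] at ha hb
  rw [fval2, fval_of_mem hB ha.1 hb.1 hab, fval_of_mem hB' ha.2 hb.2 hab]
  unfold BeforeInBoth
  rcases hB.pair_sublist_or ha.1 hb.1 hab with h | h <;>
    rcases hB'.pair_sublist_or ha.2 hb.2 hab with h' | h' <;>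
    simp [h, h', hB.not_pair_sublist_swap_s9, hB'.not_pair_sublist_swap_s9]

theorem not_beforeInBoth_of_intRev (hB' : B'.Nodup) (h : IntRev B B') :
    ¬ BeforeInBoth B B' a b := by
  rintro ⟨hab, hab'⟩
  have hne : a ≠ b := by rintro rfl; exact List.nodup_iff_sublist.1 hB' a hab'
  exact hB'.not_pair_sublist_swap_s9 hab' <| (h a (hab.subset (by simp)) b (hab.subset (by simp)) hne
    (hab'.subset (by simp)) (hab'.subset (by simp))).1 hab

theorem fval2_eq_zero_of_not_mem
    (h : ¬ (a ∈ B.toFinset ∩ B'.toFinset ∧ b ∈ B.toFinset ∩ B'.toFinset)) :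
    fval2 B B' a b = 0 := by
  simp only [Finset.mem_inter, List.mem_toFinset] at h
  by_cases hB : a ∈ B ∧ b ∈ B
  · rw [fval2, fval_eq_zero_of_not_mem (B := B') (by tauto), mul_zero]
  · rw [fval2, fval_eq_zero_of_not_mem hB, zero_mul]

variable [Fintype α]

theorem sum_offDiag_fval2_eq (hB : B.Nodup) (hB' : B'.Nodup) :
    ∑ q ∈ (Finset.univ : Finset α).offDiag, fval2 B B' q.1 q.2
      = 2 * (((B.toFinset ∩ B'.toFinset).offDiag.filter fun q =>
          BeforeInBoth B B' q.1 q.2 ∨ BeforeInBoth B B' q.2 q.1).card : ℤ)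
        - (B.toFinset ∩ B'.toFinset).offDiag.card := by
  set C := B.toFinset ∩ B'.toFinset
  have hzero : ∀ q ∈ (Finset.univ : Finset α).offDiag, q ∉ C.offDiag →
      fval2 B B' q.1 q.2 = 0 := fun q hq hqC =>
    fval2_eq_zero_of_not_mem fun h =>
      hqC (Finset.mem_offDiag.2 ⟨h.1, h.2, (Finset.mem_offDiag.1 hq).2.2⟩)
  have hval : ∀ q ∈ C.offDiag, fval2 B B' q.1 q.2
      = if BeforeInBoth B B' q.1 q.2 ∨ BeforeInBoth B B' q.2 q.1 then 1 else -1 := fun q hq =>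
    fval2_of_mem hB hB' (Finset.mem_offDiag.1 hq).1 (Finset.mem_offDiag.1 hq).2.1
      (Finset.mem_offDiag.1 hq).2.2
  rw [← Finset.sum_subset (Finset.offDiag_mono (Finset.subset_univ C)) hzero,
    Finset.sum_congr rfl hval, Finset.sum_ite, Finset.sum_const, Finset.sum_const,
    ← Finset.card_filter_add_card_filter_not (s := C.offDiag)
      (fun q => BeforeInBoth B B' q.1 q.2 ∨ BeforeInBoth B B' q.2 q.1)]
  push_cast
  ring

theorem sum_offDiag_fval2_le (hB : B.Nodup) (hB' : B'.Nodup) (h3 : ¬ SameOrder3 B B') :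
    ∑ q ∈ (Finset.univ : Finset α).offDiag, fval2 B B' q.1 q.2
      ≤ (interCard B B' : ℤ) - if IntRev B B' then (interCard B B' : ℤ) ^ 2 else 0 := by
  rw [sum_offDiag_fval2_eq hB hB', Finset.offDiag_card, ← card_toFinset_inter hB,
    Nat.cast_sub (Nat.le_mul_self _)]
  split_ifs with hIR
  · rw [Finset.filter_false_of_mem fun q _ => not_or_intro (not_beforeInBoth_of_intRev hB' hIR)
      (not_beforeInBoth_of_intRev hB' hIR), Finset.card_empty]
    push_cast
    linarith
  · have := (B.toFinset ∩ B'.toFinset).two_mul_card_filter_le_sq_of_not_chain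
      (BeforeInBoth B B') fun a b c hab hbc => h3 (sameOrder3_of_beforeInBoth hB hB' hab hbc)
    zify at this
    push_cast
    linarith

end PairCount

theorem SameOrder3.mono {α : Type*} {B₁ B₁' B B' : List α} (h : SameOrder3 B₁ B₁')
    (hB : B₁.Sublist B) (hB' : B₁'.Sublist B') : SameOrder3 B B' :=
  let ⟨a, b, c, hab, hac, hbc, h₁, h₁'⟩ := h
  ⟨a, b, c, hab, hac, hbc, h₁.trans hB, h₁'.trans hB'⟩

section InterCard

variable {α : Type*} [DecidableEq α]

theorem interCard_append_left (X₁ X₂ Y : List α) :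
    interCard (X₁ ++ X₂) Y = interCard X₁ Y + interCard X₂ Y := by
  simp only [interCard, List.filter_append, List.length_append]

theorem interCard_mono_right (X : List α) {Y₁ Y₂ : List α} (h : Y₁ ⊆ Y₂) :
    interCard X Y₁ ≤ interCard X Y₂ :=
  (List.monotone_filter_right _ fun x hx => by simpa using h (by simpa using hx)).length_le

theorem interCard_take_add_interCard_drop_le (X Y : List α) (k l : ℕ) :
    interCard (X.take k) (Y.take l) + interCard (X.drop k) (Y.drop l) ≤ interCard X Y := by
  calc interCard (X.take k) (Y.take l) + interCard (X.drop k) (Y.drop l)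
      ≤ interCard (X.take k) Y + interCard (X.drop k) Y :=
        add_le_add (interCard_mono_right _ (List.take_subset _ _))
          (interCard_mono_right _ (List.drop_subset _ _))
    _ = interCard X Y := by rw [← interCard_append_left, List.take_append_drop]

end InterCard

/-- If `A 1, …, A n` are lists of distinct symbols from a finite symbol set such
that no three symbols appear in the same order in any two distinct lists, each
split into halves, then
`S ≤ ∑_{i ≠ j} |Aᵢ ∩ Aⱼ| - ∑_{(i,j,ε) : i ≠ j, Aᵢ_ε, Aⱼ_ε int-rev} |Aᵢ_ε ∩ Aⱼ_ε|²`,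
where `S = ∑_{i ≠ j} ∑_{ε ∈ {0,1}} ∑_{(a,b) distinct} f(Aᵢ_ε, Aⱼ_ε, a, b)`. -/
theorem stmt_9 {α : Type*} [Fintype α] [DecidableEq α]
    (n : ℕ) (A : Fin n → List α) (hnd : ∀ i, (A i).Nodup)
    (h3 : ∀ i j, i ≠ j → ¬ SameOrder3 (A i) (A j)) :
    (∑ p ∈ (Finset.univ : Finset (Fin n)).offDiag,
        ((∑ q ∈ (Finset.univ : Finset α).offDiag,
            fval2 (half0 (A p.1)) (half0 (A p.2)) q.1 q.2) +
         (∑ q ∈ (Finset.univ : Finset α).offDiag,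
            fval2 (half1 (A p.1)) (half1 (A p.2)) q.1 q.2)))
      ≤ (∑ p ∈ (Finset.univ : Finset (Fin n)).offDiag,
            (interCard (A p.1) (A p.2) : ℤ))
        - (∑ p ∈ (Finset.univ : Finset (Fin n)).offDiag,
            ((if IntRev (half0 (A p.1)) (half0 (A p.2)) then
                (interCard (half0 (A p.1)) (half0 (A p.2)) : ℤ) ^ 2 else 0) +
             (if IntRev (half1 (A p.1)) (half1 (A p.2)) then
                (interCard (half1 (A p.1)) (half1 (A p.2)) : ℤ) ^ 2 else 0))) := by
  rw [← Finset.sum_sub_distrib]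
  refine Finset.sum_le_sum fun ⟨i, j⟩ hp => ?_
  have hij : i ≠ j := (Finset.mem_offDiag.1 hp).2.2
  have h0 := sum_offDiag_fval2_le (B := half0 (A i)) (B' := half0 (A j))
    ((hnd i).sublist (List.take_sublist _ _)) ((hnd j).sublist (List.take_sublist _ _))
    fun h => h3 i j hij (h.mono (List.take_sublist _ _) (List.take_sublist _ _))
  have h1 := sum_offDiag_fval2_le (B := half1 (A i)) (B' := half1 (A j))
    ((hnd i).sublist (List.drop_sublist _ _)) ((hnd j).sublist (List.drop_sublist _ _))
    fun h => h3 i j hij (h.mono (List.drop_sublist _ _) (List.drop_sublist _ _))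
  have hsplit : (interCard (half0 (A i)) (half0 (A j)) : ℤ)
      + interCard (half1 (A i)) (half1 (A j)) ≤ interCard (A i) (A j) := by
    exact_mod_cast interCard_take_add_interCard_drop_le (A i) (A j) _ _
  linarith
end

section
/- Let G be an edge-ordered graph. Suppose there exist distinct vertices u, v and pairwise distinct vertices x₁, x₂, x₃, each adjacent to both u and v, such that in the edge-order ux₁ < ux₂ < ux₃ and vx₁ < vx₂ < vx₃. Then G contains C4^{1243}. -/
/-- An edge-ordered graph: a simple graph together with a linear order on its
edge set, encoded by a real-valued labelling of `Sym2 V` that is injective on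
the edge set. -/
structure EdgeOrderedGraph (V : Type*) where
  graph : SimpleGraph V
  ord : Sym2 V → ℝ
  injOn : Set.InjOn ord graph.edgeSet

/-- The edge-ordered graph `G` contains the edge-ordered graph `H`: there is an
injective map on vertices sending edges of `H` to edges of `G` such that the
induced map on edges is strictly order-preserving. -/
def EOContains {V W : Type*} (G : EdgeOrderedGraph V) (H : EdgeOrderedGraph W) : Prop :=
  ∃ f : W → V, Function.Injective f ∧
    (∀ e ∈ H.graph.edgeSet, e.map f ∈ G.graph.edgeSet) ∧
    ∀ e₁ ∈ H.graph.edgeSet, ∀ e₂ ∈ H.graph.edgeSet,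
      H.ord e₁ < H.ord e₂ → G.ord (e₁.map f) < G.ord (e₂.map f)

/-- The four-cycle on the vertices `0, 1, 2, 3` (in this cyclic order). -/
def C4graph : SimpleGraph (Fin 4) where
  Adj u v := v = u + 1 ∨ u = v + 1
  symm := ⟨fun _ _ h => h.symm⟩
  loopless := ⟨by intro u; fin_cases u <;> decide⟩

/-- The edge-labelling giving the edge-order `01 < 12 < 30 < 23` on the
four-cycle: the edge `uv` is labelled `u² + v²`, so the labels of the edges
`01, 12, 30, 23` are `1 < 5 < 9 < 13`. -/
def C4ord : Sym2 (Fin 4) → ℝ :=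
  Sym2.lift ⟨fun u v => ((u.1 ^ 2 + v.1 ^ 2 : ℕ) : ℝ), by intro u v; simp [Nat.add_comm]⟩

/-- The edge-ordered four-cycle `C₄^{1243}`: with vertices `a = 0`, `b = 1`,
`c = 2`, `d = 3`, its edges are ordered `ab < bc < da < cd`. -/
def C4_1243 : EdgeOrderedGraph (Fin 4) where
  graph := C4graph
  ord := C4ord
  injOn := by
    have key : ∀ u v u' v' : Fin 4, (v = u + 1 ∨ u = v + 1) → (v' = u' + 1 ∨ u' = v' + 1) →
        u.1 ^ 2 + v.1 ^ 2 = u'.1 ^ 2 + v'.1 ^ 2 → s(u, v) = s(u', v') := by decide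
    intro e he e' he' h
    revert he he' h
    induction e using Sym2.ind with
    | _ u v =>
      induction e' using Sym2.ind with
      | _ u' v' =>
        intro he he' h
        rw [SimpleGraph.mem_edgeSet] at he he'
        refine key u v u' v' he he' ?_
        simp only [C4ord, Sym2.lift_mk] at h
        exact_mod_cast h

/-!
A four-cycle contains `C₄^{1243}` as soon as its smallest and largest edges are opposite: the two
middle edges are then `bc` and `da` for one of the two directions of traversal. Swapping `u` and
`v` if necessary, `ux₁ < vx₁`. If `ux₃ < vx₃`, the cycle `u x₁ v x₃` has `ux₁` smallest and `vx₃`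
largest. Otherwise `vx₃ < ux₃`, and either `ux₂ < vx₂`, when `u x₁ v x₂` works with extremes
`ux₁, vx₂`, or `vx₂ < ux₂`, when `v x₂ u x₃` works with extremes `vx₂, ux₃`.
-/

def c4Edge : Fin 4 → Sym2 (Fin 4) := ![s(0, 1), s(1, 2), s(3, 0), s(2, 3)]

lemma strictMono_ord_c4Edge : StrictMono (C4_1243.ord ∘ c4Edge) := by
  rw [Fin.strictMono_iff_lt_succ]
  intro k
  fin_cases k <;> simp [c4Edge, C4_1243, C4ord]
  norm_num

lemma exists_c4Edge_eq {e : Sym2 (Fin 4)} (he : e ∈ C4_1243.graph.edgeSet) :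
    ∃ k, c4Edge k = e := by
  induction e using Sym2.ind with
  | _ x y =>
    have key : ∀ x y : Fin 4, (y = x + 1 ∨ x = y + 1) → ∃ k, c4Edge k = s(x, y) := by decide
    exact key x y he

section

variable {V : Type*} {G : EdgeOrderedGraph V}

lemma ord_ne_of_adj_of_adj {u v x : V} (huv : u ≠ v) (hu : G.graph.Adj u x)
    (hv : G.graph.Adj v x) : G.ord s(u, x) ≠ G.ord s(v, x) :=
  (G.injOn.ne_iff hu hv).mpr (by simp [huv, hu.ne])

theorem eoContains_C4_1243_of_cycle {a b c d : V} (hac : a ≠ c) (hbd : b ≠ d)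
    (hab : G.graph.Adj a b) (hbc : G.graph.Adj b c) (hcd : G.graph.Adj c d)
    (hda : G.graph.Adj d a) (h₁ : G.ord s(a, b) < G.ord s(b, c))
    (h₂ : G.ord s(b, c) < G.ord s(d, a)) (h₃ : G.ord s(d, a) < G.ord s(c, d)) :
    EOContains G C4_1243 := by
  set f : Fin 4 → V := ![a, b, c, d]
  have hinj : Function.Injective f := by
    intro i j
    fin_cases i <;> fin_cases j <;>
      simp [f, hac, hbd, hab.ne, hbc.ne, hcd.ne, hda.ne, hac.symm, hbd.symm, hab.ne.symm,
        hbc.ne.symm, hcd.ne.symm, hda.ne.symm]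
  have hmono : StrictMono fun k => G.ord ((c4Edge k).map f) := by
    rw [Fin.strictMono_iff_lt_succ]
    intro k
    fin_cases k <;> simpa [c4Edge, f]
  refine ⟨f, hinj, ?_, ?_⟩
  · intro e he
    obtain ⟨k, rfl⟩ := exists_c4Edge_eq he
    fin_cases k <;> simpa [c4Edge, f]
  · intro e₁ he₁ e₂ he₂ hlt
    obtain ⟨k₁, rfl⟩ := exists_c4Edge_eq he₁
    obtain ⟨k₂, rfl⟩ := exists_c4Edge_eq he₂
    exact hmono (strictMono_ord_c4Edge.lt_iff_lt.mp hlt)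

theorem eoContains_C4_1243_of_opposite_extremes {p q x y : V} (hpq : p ≠ q) (hxy : x ≠ y)
    (hpx : G.graph.Adj p x) (hqx : G.graph.Adj q x) (hqy : G.graph.Adj q y)
    (hpy : G.graph.Adj p y) (h₁ : G.ord s(p, x) < G.ord s(q, x))
    (h₂ : G.ord s(p, x) < G.ord s(p, y)) (h₃ : G.ord s(q, x) < G.ord s(q, y))
    (h₄ : G.ord s(p, y) < G.ord s(q, y)) :
    EOContains G C4_1243 := by
  have hne : G.ord s(q, x) ≠ G.ord s(p, y) :=
    (G.injOn.ne_iff hqx hpy).mpr (by simp [hpq.symm, hpx.ne.symm])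
  rcases hne.lt_or_gt with hlt | hlt
  · refine eoContains_C4_1243_of_cycle hpq hxy hpx hqx.symm hqy hpy.symm ?_ ?_ ?_ <;>
      simpa only [Sym2.eq_swap]
  · refine eoContains_C4_1243_of_cycle hxy hpq hpx.symm hpy hqy.symm hqx ?_ ?_ ?_ <;>
      simpa only [Sym2.eq_swap]

theorem eoContains_C4_1243_of_K23_of_lt {u v x₁ x₂ x₃ : V} (huv : u ≠ v)
    (h12 : x₁ ≠ x₂) (h13 : x₁ ≠ x₃) (h23 : x₂ ≠ x₃)
    (hu1 : G.graph.Adj u x₁) (hu2 : G.graph.Adj u x₂) (hu3 : G.graph.Adj u x₃)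
    (hv1 : G.graph.Adj v x₁) (hv2 : G.graph.Adj v x₂) (hv3 : G.graph.Adj v x₃)
    (hu12 : G.ord s(u, x₁) < G.ord s(u, x₂)) (hu23 : G.ord s(u, x₂) < G.ord s(u, x₃))
    (hv12 : G.ord s(v, x₁) < G.ord s(v, x₂)) (hv23 : G.ord s(v, x₂) < G.ord s(v, x₃))
    (huv1 : G.ord s(u, x₁) < G.ord s(v, x₁)) :
    EOContains G C4_1243 := by
  rcases lt_or_ge (G.ord s(u, x₃)) (G.ord s(v, x₃)) with h3 | h3
  · exact eoContains_C4_1243_of_opposite_extremes huv h13 hu1 hv1 hv3 hu3 huv1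
      (hu12.trans hu23) (hv12.trans hv23) h3
  rcases lt_or_ge (G.ord s(u, x₂)) (G.ord s(v, x₂)) with h2 | h2
  · exact eoContains_C4_1243_of_opposite_extremes huv h12 hu1 hv1 hv2 hu2 huv1 hu12 hv12 h2
  · exact eoContains_C4_1243_of_opposite_extremes huv.symm h23 hv2 hu2 hu3 hv3
      (h2.lt_of_ne (ord_ne_of_adj_of_adj huv hu2 hv2).symm) hv23 hu23
      (h3.lt_of_ne (ord_ne_of_adj_of_adj huv hu3 hv3).symm)

end

theorem stmt_12_general {V : Type*} (G : EdgeOrderedGraph V)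
    (u v x₁ x₂ x₃ : V) (huv : u ≠ v)
    (h12 : x₁ ≠ x₂) (h13 : x₁ ≠ x₃) (h23 : x₂ ≠ x₃)
    (hu1 : G.graph.Adj u x₁) (hu2 : G.graph.Adj u x₂) (hu3 : G.graph.Adj u x₃)
    (hv1 : G.graph.Adj v x₁) (hv2 : G.graph.Adj v x₂) (hv3 : G.graph.Adj v x₃)
    (hu12 : G.ord s(u, x₁) < G.ord s(u, x₂)) (hu23 : G.ord s(u, x₂) < G.ord s(u, x₃))
    (hv12 : G.ord s(v, x₁) < G.ord s(v, x₂)) (hv23 : G.ord s(v, x₂) < G.ord s(v, x₃)) :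
    EOContains G C4_1243 := by
  rcases (ord_ne_of_adj_of_adj huv hu1 hv1).lt_or_gt with h | h
  · exact eoContains_C4_1243_of_K23_of_lt huv h12 h13 h23 hu1 hu2 hu3 hv1 hv2 hv3
      hu12 hu23 hv12 hv23 h
  · exact eoContains_C4_1243_of_K23_of_lt huv.symm h12 h13 h23 hv1 hv2 hv3 hu1 hu2 hu3
      hv12 hv23 hu12 hu23 h

/-- Let `G` be an edge-ordered graph with distinct vertices `u, v` and pairwise
distinct vertices `x₁, x₂, x₃`, each adjacent to both `u` and `v`, such that
`ux₁ < ux₂ < ux₃` and `vx₁ < vx₂ < vx₃` in the edge-order. Then `G` contains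
`C₄^{1243}`. -/
theorem stmt_12 {V : Type*} [Fintype V] (G : EdgeOrderedGraph V)
    (u v x₁ x₂ x₃ : V) (huv : u ≠ v)
    (h12 : x₁ ≠ x₂) (h13 : x₁ ≠ x₃) (h23 : x₂ ≠ x₃)
    (hu1 : G.graph.Adj u x₁) (hu2 : G.graph.Adj u x₂) (hu3 : G.graph.Adj u x₃)
    (hv1 : G.graph.Adj v x₁) (hv2 : G.graph.Adj v x₂) (hv3 : G.graph.Adj v x₃)
    (hu12 : G.ord s(u, x₁) < G.ord s(u, x₂)) (hu23 : G.ord s(u, x₂) < G.ord s(u, x₃))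
    (hv12 : G.ord s(v, x₁) < G.ord s(v, x₂)) (hv23 : G.ord s(v, x₂) < G.ord s(v, x₃)) :
    EOContains G C4_1243 :=
  stmt_12_general G u v x₁ x₂ x₃ huv h12 h13 h23 hu1 hu2 hu3 hv1 hv2 hv3 hu12 hu23 hv12 hv23
end

section
/- Let A be a zero-one matrix with no all-zero column, such that A contains the hat pattern and every pair of consecutive rows of A has a common column in which both rows have a 1-entry. Then for every positive integer n, ex_<(2n, G(A)) ≥ Ex(n, A). -/
/-- `exEO n H` is the maximum number of edges in an edge-ordered graph on `n`
vertices avoiding `H`. -/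
noncomputable def exEO (n : ℕ) {W : Type*} (H : EdgeOrderedGraph W) : ℕ :=
  sSup {m | ∃ G : EdgeOrderedGraph (Fin n), ¬ EOContains G H ∧ Nat.card G.graph.edgeSet = m}

/-- The zero-one matrix `M` contains the zero-one matrix `P`: there are strictly
increasing maps of the row indices and of the column indices of `P` into those
of `M` mapping every `1`-entry of `P` to a `1`-entry of `M`. -/
def MatContains {r c r' c' : ℕ} (M : Fin r' → Fin c' → Bool)
    (P : Fin r → Fin c → Bool) : Prop :=
  ∃ (f : Fin r → Fin r') (g : Fin c → Fin c'), StrictMono f ∧ StrictMono g ∧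
    ∀ i j, P i j = true → M (f i) (g j) = true

/-- The weight of a zero-one matrix: its number of `1`-entries. -/
def matWeight {r c : ℕ} (M : Fin r → Fin c → Bool) : ℕ :=
  (Finset.univ.filter fun p : Fin r × Fin c => M p.1 p.2 = true).card

/-- `ExM n P` is the maximum weight of an `n × n` zero-one matrix avoiding `P`. -/
noncomputable def ExM (n : ℕ) {r c : ℕ} (P : Fin r → Fin c → Bool) : ℕ :=
  sSup {w | ∃ M : Fin n → Fin n → Bool, ¬ MatContains M P ∧ matWeight M = w}

/-- The hat pattern, with rows `(0,1,0)` and `(1,0,1)`. -/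
def hatPattern : Fin 2 → Fin 3 → Bool :=
  ![![false, true, false], ![true, false, true]]

/-- The adjacency relation of the bipartite graph of the zero-one matrix `A`:
row `i` is adjacent to column `j` exactly when `A i j = 1`. -/
def biAdj {r c : ℕ} (A : Fin r → Fin c → Bool) :
    (Fin r ⊕ Fin c) → (Fin r ⊕ Fin c) → Prop
  | Sum.inl i, Sum.inr j => A i j = true
  | Sum.inr j, Sum.inl i => A i j = true
  | _, _ => False

/-- The lexicographic edge label of the edge joining row `i` and column `j`:
edges are ordered first by column index, then by row index. -/
def lexv (r : ℕ) {c : ℕ} : (Fin r ⊕ Fin c) → (Fin r ⊕ Fin c) → ℝ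
  | Sum.inl i, Sum.inr j => ((j.1 * r + i.1 : ℕ) : ℝ)
  | Sum.inr j, Sum.inl i => ((j.1 * r + i.1 : ℕ) : ℝ)
  | _, _ => 0

/-- `G(A)`: the edge-ordered bipartite graph of the zero-one matrix `A`, whose
vertices are the rows and the columns of `A`, with row `i` adjacent to column
`j` exactly when `A i j = 1`, and whose edges are ordered lexicographically
(first by column, then by row). -/
def GA {r c : ℕ} (A : Fin r → Fin c → Bool) : EdgeOrderedGraph (Fin r ⊕ Fin c) where
  graph :=
    { Adj := biAdj A
      symm := ⟨by rintro (i | j) (i' | j') h <;> exact h⟩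
      loopless := ⟨by rintro (i | j) h <;> exact h⟩ }
  ord := Sym2.lift ⟨lexv r, by rintro (i | j) (i' | j') <;> rfl⟩
  injOn := by
    have key : ∀ (i i' : Fin r) (j j' : Fin c),
        j.1 * r + i.1 = j'.1 * r + i'.1 → i = i' ∧ j = j' := by
      intro i i' j j' hn
      have hr : 0 < r := i.pos
      have hi : i.1 = i'.1 := by
        have h1 : (j.1 * r + i.1) % r = i.1 := by
          rw [Nat.mul_comm, Nat.mul_add_mod]; exact Nat.mod_eq_of_lt i.isLt
        have h2 : (j'.1 * r + i'.1) % r = i'.1 := by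
          rw [Nat.mul_comm, Nat.mul_add_mod]; exact Nat.mod_eq_of_lt i'.isLt
        rw [← h1, ← h2, hn]
      have hj : j.1 = j'.1 := by
        rw [hi] at hn
        exact Nat.eq_of_mul_eq_mul_right hr (Nat.add_right_cancel hn)
      exact ⟨Fin.ext hi, Fin.ext hj⟩
    intro e he e' he' h
    revert he he' h
    induction e using Sym2.ind with
    | _ u v =>
      induction e' using Sym2.ind with
      | _ u' v' =>
        intro he he' h
        rw [SimpleGraph.mem_edgeSet] at he he'
        rcases u with i | j <;> rcases v with i₂ | j₂ <;>
          rcases u' with i' | j' <;> rcases v' with i₂' | j₂' <;>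
          (try exact he.elim) <;> (try exact he'.elim) <;>
          simp only [Sym2.lift_mk, lexv] at h <;>
          obtain ⟨hi, hj⟩ := key _ _ _ _ (Nat.cast_inj.mp h) <;>
          subst hi <;> subst hj <;>
          first
            | rfl
            | exact Sym2.eq_swap

open Function Sum

theorem SimpleGraph.mem_edgeSet_comap_iff {V W : Type*} (e : V ≃ W) (G : SimpleGraph W)
    {s : Sym2 V} : s ∈ (G.comap e).edgeSet ↔ s.map e ∈ G.edgeSet :=
  (SimpleGraph.Iso.comap e G).map_mem_edgeSet_iff.symm

namespace EdgeOrderedGraph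

variable {V W : Type*}

def comap (e : V ≃ W) (G : EdgeOrderedGraph W) : EdgeOrderedGraph V where
  graph := G.graph.comap e
  ord s := G.ord (s.map e)
  injOn _ hs _ hs' h := Sym2.map.injective e.injective <|
    G.injOn ((G.graph.mem_edgeSet_comap_iff e).mp hs) ((G.graph.mem_edgeSet_comap_iff e).mp hs') h

theorem card_edgeSet_comap (e : V ≃ W) (G : EdgeOrderedGraph W) :
    Nat.card (G.comap e).graph.edgeSet = Nat.card G.graph.edgeSet :=
  Nat.card_congr (SimpleGraph.Iso.comap e G.graph).mapEdgeSet

theorem eoContains_comap (e : V ≃ W) (G : EdgeOrderedGraph W) : EOContains G (G.comap e) :=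
  ⟨e, e.injective, fun _ hs => (G.graph.mem_edgeSet_comap_iff e).mp hs, fun _ _ _ _ h => h⟩

end EdgeOrderedGraph

theorem EOContains.trans {U V W : Type*} {G : EdgeOrderedGraph U} {G' : EdgeOrderedGraph V}
    {H : EdgeOrderedGraph W} (hG : EOContains G G') (hG' : EOContains G' H) : EOContains G H := by
  obtain ⟨f, hf, hfedge, hford⟩ := hG
  obtain ⟨g, hg, hgedge, hgord⟩ := hG'
  refine ⟨f ∘ g, hf.comp hg, fun s hs => ?_, fun s hs s' hs' h => ?_⟩
  · rw [← Sym2.map_map]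
    exact hfedge _ (hgedge s hs)
  · rw [← Sym2.map_map, ← Sym2.map_map]
    exact hford _ (hgedge s hs) _ (hgedge s' hs') (hgord s hs s' hs' h)

theorem card_edgeSet_le_exEO {n : ℕ} {W : Type*} {H : EdgeOrderedGraph W}
    (G : EdgeOrderedGraph (Fin n)) (hG : ¬ EOContains G H) :
    Nat.card G.graph.edgeSet ≤ exEO n H :=
  le_csSup ⟨Nat.card (Sym2 (Fin n)), by
    rintro _ ⟨G', -, rfl⟩
    exact Finite.card_subtype_le _⟩ ⟨G, hG, rfl⟩

theorem mul_add_lt_mul_add {r j j' i i' : ℕ} (hi : i < r) (hj : j < j') :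
    j * r + i < j' * r + i' :=
  calc j * r + i < (j + 1) * r := by rw [add_mul, one_mul]; omega
    _ ≤ j' * r := Nat.mul_le_mul_right r hj
    _ ≤ j' * r + i' := Nat.le_add_right _ _

theorem toLex_lt_toLex_iff_mul_add_lt {r c : ℕ} {i i' : Fin r} {j j' : Fin c} :
    toLex (j, i) < toLex (j', i') ↔ j.1 * r + i.1 < j'.1 * r + i'.1 := by
  rw [Prod.Lex.toLex_lt_toLex]
  constructor
  · rintro (hj | ⟨hj, hi⟩)
    · exact mul_add_lt_mul_add i.isLt hj
    · simp only at hj hi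
      rw [hj]
      exact Nat.add_lt_add_left hi _
  · intro h
    rcases lt_trichotomy j j' with hj | hj | hj
    · exact Or.inl hj
    · subst hj
      exact Or.inr ⟨rfl, Nat.lt_of_add_lt_add_left h⟩
    · exact absurd h (mul_add_lt_mul_add i'.isLt hj).not_gt

theorem eq_of_forall_lt_succ_eq {α : Type*} {r : ℕ} {φ : Fin r → α}
    (h : ∀ (i : ℕ) (hi : i + 1 < r), φ ⟨i, Nat.lt_of_succ_lt hi⟩ = φ ⟨i + 1, hi⟩) (i j : Fin r) :
    φ i = φ j := by
  cases r with
  | zero => exact i.elim0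
  | succ r =>
    have hzero : ∀ k : Fin (r + 1), φ k = φ 0 :=
      Fin.induction rfl fun k hk => (h k (by omega)).symm.trans hk
    rw [hzero i, hzero j]

theorem strictMono_of_forall_lt_succ {α : Type*} [Preorder α] {r : ℕ} {φ : Fin r → α}
    (h : ∀ (i : ℕ) (hi : i + 1 < r), φ ⟨i, Nat.lt_of_succ_lt hi⟩ < φ ⟨i + 1, hi⟩) :
    StrictMono φ := by
  cases r with
  | zero => exact fun i => i.elim0
  | succ r => exact Fin.strictMono_iff_lt_succ.mpr fun k => h k (by omega)

section GA

variable {r c : ℕ} (A : Fin r → Fin c → Bool)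

theorem mem_edgeSet_GA {i : Fin r} {j : Fin c} :
    s(inl i, inr j) ∈ (GA A).graph.edgeSet ↔ A i j = true :=
  Iff.rfl

theorem isLeft_eq_not_of_GA_adj {u v : Fin r ⊕ Fin c} (h : (GA A).graph.Adj u v) :
    u.isLeft = !v.isLeft := by
  rcases u with _ | _ <;> rcases v with _ | _ <;> first | rfl | exact h.elim

theorem GA_ord_lt_GA_ord_iff {i i' : Fin r} {j j' : Fin c} :
    (GA A).ord s(inl i, inr j) < (GA A).ord s(inl i', inr j') ↔ toLex (j, i) < toLex (j', i') :=
  Nat.cast_lt.trans toLex_lt_toLex_iff_mul_add_lt.symm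

theorem card_edgeSet_GA : Nat.card (GA A).graph.edgeSet = matWeight A := by
  let toEdge (p : {p : Fin r × Fin c // A p.1 p.2 = true}) : (GA A).graph.edgeSet :=
    ⟨s(inl p.1.1, inr p.1.2), p.2⟩
  have hbij : Bijective toEdge := by
    refine ⟨fun p q h => ?_, fun ⟨s, hs⟩ => ?_⟩
    · rcases Sym2.eq_iff.mp (congrArg Subtype.val h) with ⟨hi, hj⟩ | ⟨h, -⟩
      · exact Subtype.ext (Prod.ext (inl_injective hi) (inr_injective hj))
      · exact (inl_ne_inr h).elim
    · induction s using Sym2.ind with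
      | _ u v =>
        rcases u with i | j <;> rcases v with i' | j'
        · exact hs.elim
        · exact ⟨⟨(i, j'), hs⟩, rfl⟩
        · exact ⟨⟨(i', j), hs⟩, Subtype.ext Sym2.eq_swap⟩
        · exact hs.elim
  rw [← Nat.card_congr (Equiv.ofBijective toEdge hbij), Nat.card_eq_fintype_card,
    Fintype.card_subtype]
  rfl

end GA

section Embedding

variable {r c : ℕ} {A : Fin r → Fin c → Bool}

/-- `φ` is strictly increasing on the `1`-entries of `A` listed in column-major order, which is
the edge order of `G(A)`. -/
def StrictMonoOnOnes {δ : Type*} [LT δ] (A : Fin r → Fin c → Bool) (φ : Fin r → Fin c → δ) :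
    Prop :=
  ∀ ⦃i j i' j'⦄, A i j = true → A i' j' = true → toLex (j, i) < toLex (j', i') → φ i j < φ i' j'

namespace StrictMonoOnOnes

variable {α β : Type*}

theorem strictMono_cols [Preorder α] [LT β] {γ : Fin c → α} {ρ : Fin r → β}
    (h : StrictMonoOnOnes A fun i j => toLex (γ j, ρ i))
    (hcol : ∀ j : Fin c, ∃ i : Fin r, A i j = true) (hγ : Injective γ) : StrictMono γ := by
  intro j j' hj
  obtain ⟨i, hi⟩ := hcol j
  obtain ⟨i', hi'⟩ := hcol j'
  rcases Prod.Lex.toLex_lt_toLex.mp (h hi hi' (Prod.Lex.toLex_lt_toLex.mpr (Or.inl hj)))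
    with hlt | ⟨heq, -⟩
  · exact hlt
  · exact absurd (hγ heq) hj.ne

theorem strictMono_rows [Preorder α] [Preorder β] {γ : Fin c → α} {ρ : Fin r → β}
    (h : StrictMonoOnOnes A fun i j => toLex (γ j, ρ i))
    (hconsec : ∀ (i : ℕ) (h1 : i + 1 < r),
      ∃ j : Fin c, A ⟨i, Nat.lt_of_succ_lt h1⟩ j = true ∧ A ⟨i + 1, h1⟩ j = true) :
    StrictMono ρ := by
  refine strictMono_of_forall_lt_succ fun i hi => ?_
  obtain ⟨j, hij, hij'⟩ := hconsec i hi
  rcases Prod.Lex.toLex_lt_toLex.mp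
      (h hij hij' (Prod.Lex.toLex_lt_toLex.mpr (Or.inr ⟨rfl, Nat.lt_succ_self i⟩)))
    with hlt | ⟨-, hlt⟩
  · exact absurd hlt (lt_irrefl _)
  · exact hlt

/-- The hat forces two distinct rows onto the same first coordinate, so an embedding of `G(A)`
cannot exchange rows and columns. -/
theorem not_swap_of_hat [PartialOrder α] [Preorder β] {ρ : Fin r → α} {γ : Fin c → β}
    (hρ : Injective ρ) (hhat : MatContains A hatPattern) :
    ¬ StrictMonoOnOnes A fun i j => toLex (ρ i, γ j) := by
  obtain ⟨f, g, hf, hg, hA⟩ := hhat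
  intro h
  have fst_le {x y : α × β} (hxy : toLex x < toLex y) : x.1 ≤ y.1 := by
    rcases Prod.Lex.toLex_lt_toLex.mp hxy with hlt | ⟨heq, -⟩
    exacts [hlt.le, heq.le]
  have h₁ := h (hA 1 0 (by decide)) (hA 0 1 (by decide))
    (Prod.Lex.toLex_lt_toLex.mpr (Or.inl (hg (by decide))))
  have h₂ := h (hA 0 1 (by decide)) (hA 1 2 (by decide))
    (Prod.Lex.toLex_lt_toLex.mpr (Or.inl (hg (by decide))))
  have hρf : ρ (f 0) = ρ (f 1) := le_antisymm (fst_le h₂) (fst_le h₁)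
  exact (hf (show (0 : Fin 2) < 1 by decide)).ne (hρ hρf)

end StrictMonoOnOnes

end Embedding

section Sides

variable {r c r' c' : ℕ} {A : Fin r → Fin c → Bool} {M : Fin r' → Fin c' → Bool}

/-- `G(M)` is bipartite and consecutive rows of `A` share a column, so all rows of `A` land on
one side of `G(M)` and, as no column of `A` is empty, all columns on the other. -/
theorem GA_sides_of_adj (hcol : ∀ j : Fin c, ∃ i : Fin r, A i j = true)
    (hconsec : ∀ (i : ℕ) (h1 : i + 1 < r),
      ∃ j : Fin c, A ⟨i, Nat.lt_of_succ_lt h1⟩ j = true ∧ A ⟨i + 1, h1⟩ j = true)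
    {f : Fin r ⊕ Fin c → Fin r' ⊕ Fin c'}
    (hadj : ∀ i j, A i j = true → (GA M).graph.Adj (f (inl i)) (f (inr j))) :
    (∃ (ρ : Fin r → Fin r') (γ : Fin c → Fin c'),
        (∀ i, f (inl i) = inl (ρ i)) ∧ ∀ j, f (inr j) = inr (γ j)) ∨
      (∃ (ρ : Fin r → Fin c') (γ : Fin c → Fin r'),
        (∀ i, f (inl i) = inr (ρ i)) ∧ ∀ j, f (inr j) = inl (γ j)) := by
  have hrows : ∀ i i', (f (inl i)).isLeft = (f (inl i')).isLeft :=
    eq_of_forall_lt_succ_eq fun k hk => by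
      obtain ⟨j, hkj, hkj'⟩ := hconsec k hk
      rw [isLeft_eq_not_of_GA_adj M (hadj _ _ hkj), isLeft_eq_not_of_GA_adj M (hadj _ _ hkj')]
  have hcols : ∀ i j, (f (inr j)).isLeft = !(f (inl i)).isLeft := fun i j => by
    obtain ⟨i', hi'⟩ := hcol j
    rw [hrows i i', isLeft_eq_not_of_GA_adj M (hadj _ _ hi'), Bool.not_not]
  by_cases h : ∀ i, (f (inl i)).isLeft
  · left
    choose ρ hρ using fun i => Sum.isLeft_iff.mp (h i)
    choose γ hγ using fun j => Sum.isRight_iff.mp <| Sum.not_isLeft.mp <| by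
      obtain ⟨i, -⟩ := hcol j
      rw [hcols i j, h i]
      decide
    exact ⟨ρ, γ, hρ, hγ⟩
  · right
    obtain ⟨i₀, hi₀⟩ := not_forall.mp h
    choose ρ hρ using fun i => Sum.isRight_iff.mp <| Sum.not_isLeft.mp <| by
      rw [hrows i i₀]
      exact hi₀
    choose γ hγ using fun j => Sum.isLeft_iff.mp <| by
      rw [hcols i₀ j]
      simpa using hi₀
    exact ⟨ρ, γ, hρ, hγ⟩

end Sides

theorem matContains_of_eoContains_GA {r c r' c' : ℕ} {A : Fin r → Fin c → Bool}
    {M : Fin r' → Fin c' → Bool} (hcol : ∀ j : Fin c, ∃ i : Fin r, A i j = true)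
    (hhat : MatContains A hatPattern)
    (hconsec : ∀ (i : ℕ) (h1 : i + 1 < r),
      ∃ j : Fin c, A ⟨i, Nat.lt_of_succ_lt h1⟩ j = true ∧ A ⟨i + 1, h1⟩ j = true)
    (h : EOContains (GA M) (GA A)) : MatContains M A := by
  obtain ⟨f, hf, hedge, hord⟩ := h
  have hadj : ∀ i j, A i j = true → (GA M).graph.Adj (f (inl i)) (f (inr j)) :=
    fun i j hij => hedge _ ((mem_edgeSet_GA A).mpr hij)
  have hmono : StrictMonoOnOnes A fun i j => (GA M).ord s(f (inl i), f (inr j)) :=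
    fun i j i' j' hij hij' hlt => hord _ hij _ hij' ((GA_ord_lt_GA_ord_iff A).mpr hlt)
  rcases GA_sides_of_adj hcol hconsec hadj with ⟨ρ, γ, hρ, hγ⟩ | ⟨ρ, γ, hρ, hγ⟩
  · have hlex : StrictMonoOnOnes A fun i j => toLex (γ j, ρ i) := fun i j i' j' hij hij' hlt => by
      simpa only [hρ, hγ, GA_ord_lt_GA_ord_iff] using hmono hij hij' hlt
    have hγinj : Injective γ := fun j j' hjj' => inr_injective (hf (by rw [hγ, hγ, hjj']))
    refine ⟨ρ, γ, hlex.strictMono_rows hconsec, hlex.strictMono_cols hcol hγinj, fun i j hij => ?_⟩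
    have := hadj i j hij
    rwa [hρ, hγ] at this
  · have hlex : StrictMonoOnOnes A fun i j => toLex (ρ i, γ j) := fun i j i' j' hij hij' hlt => by
      simpa only [hρ, hγ, Sym2.eq_swap (a := inr _), GA_ord_lt_GA_ord_iff] using
        hmono hij hij' hlt
    have hρinj : Injective ρ := fun i i' hii' => inl_injective (hf (by rw [hρ, hρ, hii']))
    exact (StrictMonoOnOnes.not_swap_of_hat hρinj hhat hlex).elim

theorem stmt_13_general {r c : ℕ} (A : Fin r → Fin c → Bool)
    (hcol : ∀ j : Fin c, ∃ i : Fin r, A i j = true)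
    (hhat : MatContains A hatPattern)
    (hconsec : ∀ (i : ℕ) (h1 : i + 1 < r),
      ∃ j : Fin c, A ⟨i, Nat.lt_of_succ_lt h1⟩ j = true ∧ A ⟨i + 1, h1⟩ j = true)
    (n : ℕ) :
    ExM n A ≤ exEO (2 * n) (GA A) := by
  let e : Fin (2 * n) ≃ Fin n ⊕ Fin n := (finCongr (two_mul n)).trans finSumFinEquiv.symm
  refine csSup_le' ?_
  rintro _ ⟨M, hM, rfl⟩
  calc matWeight M = Nat.card ((GA M).comap e).graph.edgeSet := by
        rw [EdgeOrderedGraph.card_edgeSet_comap, card_edgeSet_GA]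
    _ ≤ exEO (2 * n) (GA A) := card_edgeSet_le_exEO _ fun h =>
        hM (matContains_of_eoContains_GA hcol hhat hconsec
          ((EdgeOrderedGraph.eoContains_comap e (GA M)).trans h))

/-- Let `A` be a zero-one matrix with no all-zero column, containing the hat
pattern, and such that every pair of consecutive rows has a common column in
which both rows have a `1`-entry. Then `ex_<(2n, G(A)) ≥ Ex(n, A)` for every
positive integer `n`. -/
theorem stmt_13 {r c : ℕ} (A : Fin r → Fin c → Bool)
    (hcol : ∀ j : Fin c, ∃ i : Fin r, A i j = true)
    (hhat : MatContains A hatPattern)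
    (hconsec : ∀ (i : ℕ) (h1 : i + 1 < r),
      ∃ j : Fin c, A ⟨i, Nat.lt_of_succ_lt h1⟩ j = true ∧ A ⟨i + 1, h1⟩ j = true)
    (n : ℕ) (hn : 0 < n) :
    ExM n A ≤ exEO (2 * n) (GA A) :=
  stmt_13_general A hcol hhat hconsec n
end
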